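/- Correctness of the Viterbi (max-product) recursion for the semi-Markov model: assume the potentials R and A take nonnegative values. For 1 ≤ j ≤ T and s ∈ S let M_j(s) denote the maximum of Φ[ζ] over segmentations ζ of [1,j] whose last segment has state s. Then for every such j and s, M_j(s) = max( max_{2 ≤ i ≤ j, s' ∈ S} M_{i-1}(s') · A(s',s,i-1) · R(s,i,j) , R(s,1,j) ) (the inner max being omitted when j = 1), and the maximum of Φ[ζ] over all segmentations ζ of [1,T] equals max_{s ∈ S} M_T(s). -/

import Mathlib

/-- A segmentation of an interval is encoded as a nonempty list of pairs
(state, positive segment length).  `segPhi R A t0 ζ` is the joint potential of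
the segmentation `ζ` of an interval starting at time `t0 + 1`: the product of
the segment potentials `R s (t_{k-1}+1) t_k` over all segments and of the
transition potentials `A s_k s_{k+1} t_k` over consecutive segments. -/
noncomputable def segPhi {S : Type*} (R : S → ℕ → ℕ → ℝ) (A : S → S → ℕ → ℝ) :
    ℕ → List (S × ℕ) → ℝ
  | _, [] => 1
  | t0, [(s, l)] => R s (t0 + 1) (t0 + l)
  | t0, (s, l) :: (s', l') :: rest =>
      R s (t0 + 1) (t0 + l) * A s s' (t0 + l) *
        segPhi R A (t0 + l) ((s', l') :: rest)

/-- `IsSegmentation a b ζ` : the list `ζ` of (state, length) pairs is a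
segmentation of the interval `[a, b]`: it is nonempty, all segment lengths are
positive, and the lengths sum to `b - a + 1`. -/
def IsSegmentation {S : Type*} (a b : ℕ) (ζ : List (S × ℕ)) : Prop :=
  ζ ≠ [] ∧ (∀ p ∈ ζ, 0 < p.2) ∧ (ζ.map Prod.snd).sum = b + 1 - a

/-- The Viterbi (max-product) quantity `M_j(s)`: the maximum of the joint
potentials of segmentations of `[1, j]` whose last segment has state `s`
(expressed as the supremum of the finite nonempty set of their values). -/
noncomputable def vitMax {S : Type*} (R : S → ℕ → ℕ → ℝ) (A : S → S → ℕ → ℝ)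
    (j : ℕ) (s : S) : ℝ :=
  sSup {x : ℝ | ∃ ζ : List (S × ℕ),
    IsSegmentation 1 j ζ ∧ Option.map Prod.fst ζ.getLast? = some s ∧
      segPhi R A 0 ζ = x}

/-!
Cutting off the last segment `[i, j]` of a segmentation of `[1, j]` with at least two segments
leaves a segmentation of `[1, i - 1]`, and the joint potential factors as
`Φ[ζ'] · A(s', s, i - 1) · R(s, i, j)`. Hence the set of potentials of segmentations of `[1, j]`
ending in state `s` is `{R(s, 1, j)}` together with the images of the earlier such sets under the
maps `x ↦ x · A(s', s, i - 1) · R(s, i, j)`, which are monotone because the potentials are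
nonnegative. A greatest element survives monotone images and finite unions, so by strong induction
on `j` every such set has a greatest element, which is both `M_j(s)` and the right-hand side of
the recursion.
-/

open Finset

theorem Finset.isGreatest_biUnion {ι α : Type*} [LinearOrder α] {t : Finset ι}
    (ht : t.Nonempty) {f : ι → Set α} {g : ι → α} (h : ∀ i ∈ t, IsGreatest (f i) (g i)) :
    IsGreatest (⋃ i ∈ t, f i) (t.sup' ht g) := by
  obtain ⟨i, hi, hgi⟩ := t.exists_mem_eq_sup' ht g
  refine ⟨Set.mem_biUnion hi (hgi ▸ (h i hi).1), ?_⟩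
  intro x hx
  obtain ⟨k, hk, hx⟩ := Set.mem_iUnion₂.1 hx
  exact ((h k hk).2 hx).trans (le_sup' g hk)

section Segmentation

variable {S : Type*}

theorem IsSegmentation.sum_eq {m : ℕ} {ζ : List (S × ℕ)} (h : IsSegmentation 1 m ζ) :
    (ζ.map Prod.snd).sum = m :=
  h.2.2.trans (Nat.add_sub_cancel m 1)

theorem IsSegmentation.one_le {m : ℕ} {ζ : List (S × ℕ)} (h : IsSegmentation 1 m ζ) :
    1 ≤ m := by
  obtain ⟨p, ζ, rfl⟩ := List.exists_cons_of_ne_nil h.1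
  have hp := h.2.1 p List.mem_cons_self
  have hsum := h.sum_eq
  simp only [List.map_cons, List.sum_cons] at hsum
  omega

theorem isSegmentation_singleton (s : S) {j : ℕ} (hj : 1 ≤ j) :
    IsSegmentation 1 j [(s, j)] :=
  ⟨List.cons_ne_nil _ _, by simp; omega, by simp⟩

theorem isSegmentation_append_singleton_iff {ζ : List (S × ℕ)} (hζ : ζ ≠ []) {j l : ℕ}
    (s : S) :
    IsSegmentation 1 j (ζ ++ [(s, l)]) ↔ IsSegmentation 1 (j - l) ζ ∧ 0 < l ∧ l < j := by
  constructor
  · rintro ⟨-, hpos, hsum⟩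
    simp only [List.map_append, List.map_cons, List.map_nil, List.sum_append,
      List.sum_cons, List.sum_nil] at hsum
    have hseg : IsSegmentation 1 (j - l) ζ :=
      ⟨hζ, fun p hp => hpos p (List.mem_append_left _ hp), by omega⟩
    have := hseg.one_le
    exact ⟨hseg, hpos (s, l) (by simp), by omega⟩
  · rintro ⟨hseg, hl, hlj⟩
    refine ⟨by simp, ?_, ?_⟩
    · simpa [or_imp, forall_and, hl] using hseg.2.1
    · simp [hseg.sum_eq]
      omega

variable (R : S → ℕ → ℕ → ℝ) (A : S → S → ℕ → ℝ)

theorem segPhi_append_singleton {ζ : List (S × ℕ)} {q : S × ℕ} (hq : ζ.getLast? = some q)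
    (t0 : ℕ) (s : S) (l : ℕ) :
    segPhi R A t0 (ζ ++ [(s, l)]) =
      segPhi R A t0 ζ * A q.1 s (t0 + (ζ.map Prod.snd).sum) *
        R s (t0 + (ζ.map Prod.snd).sum + 1) (t0 + (ζ.map Prod.snd).sum + l) := by
  induction ζ generalizing t0 with
  | nil => simp at hq
  | cons p ζ ih =>
    cases ζ with
    | nil =>
      obtain rfl : p = q := by simpa using hq
      simp [segPhi]
    | cons p' ζ =>
      rw [List.getLast?_cons_cons] at hq
      simp only [List.cons_append, segPhi] at ih ⊢
      rw [ih hq]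
      simp only [List.map_cons, List.sum_cons, add_assoc]
      ring

end Segmentation

section Viterbi

variable {S : Type*} (R : S → ℕ → ℕ → ℝ) (A : S → S → ℕ → ℝ)

def segValues (j : ℕ) (s : S) : Set ℝ :=
  {x | ∃ ζ : List (S × ℕ),
    IsSegmentation 1 j ζ ∧ Option.map Prod.fst ζ.getLast? = some s ∧ segPhi R A 0 ζ = x}

noncomputable def viterbiStep [Fintype S] [Nonempty S] (j : ℕ) (s : S) : ℝ :=
  if h : 2 ≤ j then
    max
      ((Icc 2 j ×ˢ (univ : Finset S)).sup'
        ((nonempty_Icc.mpr h).product univ_nonempty)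
        (fun p => vitMax R A (p.1 - 1) p.2 * A p.2 s (p.1 - 1) * R s p.1 j))
      (R s 1 j)
  else R s 1 j

theorem segValues_eq_union [Fintype S] {j : ℕ} (hj : 1 ≤ j) (s : S) :
    segValues R A j s =
      (⋃ p ∈ Icc 2 j ×ˢ (univ : Finset S),
        (fun x => x * A p.2 s (p.1 - 1) * R s p.1 j) '' segValues R A (p.1 - 1) p.2) ∪
      {R s 1 j} := by
  ext x
  simp only [segValues, Set.mem_union, Set.mem_iUnion, Set.mem_image, Set.mem_singleton_iff,
    mem_product, mem_Icc, mem_univ, and_true, exists_prop]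
  constructor
  · rintro ⟨ζ, hseg, hlast, rfl⟩
    obtain rfl | ⟨ζ, ⟨s', l⟩, rfl⟩ := List.eq_nil_or_concat ζ
    · exact absurd rfl hseg.1
    rw [List.concat_eq_append] at hseg hlast ⊢
    obtain rfl : s = s' := by simpa using hlast.symm
    rcases eq_or_ne ζ [] with rfl | hζ
    · obtain rfl : l = j := by simpa using hseg.sum_eq
      simp [segPhi]
    · obtain ⟨hseg', hl, hlj⟩ := (isSegmentation_append_singleton_iff hζ s).1 hseg
      obtain ⟨q, hq⟩ : ∃ q, ζ.getLast? = some q := ⟨_, List.getLast?_eq_some_getLast hζ⟩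
      left
      refine ⟨(j - l + 1, q.1), ⟨by omega, by omega⟩, segPhi R A 0 ζ,
        ⟨ζ, by simpa using hseg', by simp [hq], rfl⟩, ?_⟩
      rw [segPhi_append_singleton R A hq, hseg'.sum_eq, zero_add, Nat.add_sub_cancel,
        Nat.sub_add_cancel hlj.le]
  · rintro (⟨⟨i, s'⟩, ⟨hi2, hij⟩, y, ⟨ζ, hseg, hlast, rfl⟩, rfl⟩ | rfl)
    · obtain ⟨q, hq, rfl⟩ := Option.map_eq_some_iff.1 hlast
      have hji : j - (j - (i - 1)) = i - 1 := by omega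
      refine ⟨ζ ++ [(s, j - (i - 1))], (isSegmentation_append_singleton_iff hseg.1 s).2
        ⟨by rwa [hji], by omega, by omega⟩, by simp, ?_⟩
      rw [segPhi_append_singleton R A hq, hseg.sum_eq, zero_add,
        Nat.sub_add_cancel (by omega : 1 ≤ i), Nat.add_sub_cancel' (by omega : i - 1 ≤ j)]
    · exact ⟨[(s, j)], isSegmentation_singleton s hj, rfl, by simp [segPhi]⟩

theorem setOf_segPhi_eq_biUnion_segValues [Fintype S] (j : ℕ) :
    {x : ℝ | ∃ ζ : List (S × ℕ), IsSegmentation 1 j ζ ∧ segPhi R A 0 ζ = x} =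
      ⋃ s ∈ (univ : Finset S), segValues R A j s := by
  ext x
  simp only [segValues, mem_univ, Set.iUnion_true, Set.mem_iUnion]
  constructor
  · rintro ⟨ζ, hseg, rfl⟩
    exact ⟨_, ζ, hseg, by rw [List.getLast?_eq_some_getLast hseg.1]; rfl, rfl⟩
  · rintro ⟨-, ζ, hseg, -, rfl⟩
    exact ⟨ζ, hseg, rfl⟩

variable [Fintype S] [Nonempty S]

theorem isGreatest_segValues_viterbiStep (hR : ∀ s i j, 0 ≤ R s i j)
    (hA : ∀ s s' t, 0 ≤ A s s' t) {j : ℕ} (hj : 1 ≤ j)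
    (ih : ∀ i < j, 1 ≤ i → ∀ s', IsGreatest (segValues R A i s') (vitMax R A i s'))
    (s : S) :
    IsGreatest (segValues R A j s) (viterbiStep R A j s) := by
  rw [segValues_eq_union R A hj, viterbiStep]
  split_ifs with h2
  · refine (isGreatest_biUnion _ fun p hp => ?_).union isGreatest_singleton
    obtain ⟨hi2, hij⟩ := mem_Icc.1 (mem_product.1 hp).1
    have hmono : Monotone fun x => x * A p.2 s (p.1 - 1) * R s p.1 j := fun x y hxy =>
      mul_le_mul_of_nonneg_right (mul_le_mul_of_nonneg_right hxy (hA _ _ _)) (hR _ _ _)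
    exact hmono.map_isGreatest (ih (p.1 - 1) (by omega) (by omega) p.2)
  · rw [Icc_eq_empty (by omega), empty_product]
    simp [isGreatest_singleton]

theorem isGreatest_segValues_vitMax (hR : ∀ s i j, 0 ≤ R s i j)
    (hA : ∀ s s' t, 0 ≤ A s s' t) {j : ℕ} (hj : 1 ≤ j) (s : S) :
    IsGreatest (segValues R A j s) (vitMax R A j s) := by
  induction j using Nat.strong_induction_on generalizing s with
  | _ j ih =>
    have h := isGreatest_segValues_viterbiStep R A hR hA hj ih s
    have heq : vitMax R A j s = viterbiStep R A j s := h.csSup_eq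
    rwa [heq]

theorem vitMax_eq_viterbiStep (hR : ∀ s i j, 0 ≤ R s i j)
    (hA : ∀ s s' t, 0 ≤ A s s' t) {j : ℕ} (hj : 1 ≤ j) (s : S) :
    vitMax R A j s = viterbiStep R A j s :=
  (isGreatest_segValues_viterbiStep R A hR hA hj
    (fun _ _ hi => isGreatest_segValues_vitMax R A hR hA hi) s).csSup_eq

end Viterbi

/-- Correctness of the Viterbi (max-product) recursion for the semi-Markov model
with nonnegative potentials: `M_j(s)` satisfies the max-product recursion
` M_j(s) = max( max_{2 ≤ i ≤ j, s'} M_{i-1}(s') · A(s',s,i-1) · R(s,i,j), R(s,1,j) )`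
(the inner max omitted when `j = 1`), and the maximum joint potential over all
segmentations of `[1,T]` equals `max_{s} M_T(s)`. -/
theorem semiCRF_viterbi_correctness {S : Type*} [Fintype S] [Nonempty S]
    (T : ℕ) (hT : 1 ≤ T)
    (R : S → ℕ → ℕ → ℝ) (A : S → S → ℕ → ℝ)
    (hR : ∀ s i j, 0 ≤ R s i j) (hA : ∀ s s' t, 0 ≤ A s s' t) :
    (∀ j, 1 ≤ j → j ≤ T → ∀ s : S,
      vitMax R A j s =
        if h : 2 ≤ j then
          max
            ((Finset.Icc 2 j ×ˢ (Finset.univ : Finset S)).sup'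
              (Finset.Nonempty.product (Finset.nonempty_Icc.mpr h)
                Finset.univ_nonempty)
              (fun p => vitMax R A (p.1 - 1) p.2 * A p.2 s (p.1 - 1) * R s p.1 j))
            (R s 1 j)
        else R s 1 j)
    ∧ sSup {x : ℝ | ∃ ζ : List (S × ℕ),
          IsSegmentation 1 T ζ ∧ segPhi R A 0 ζ = x} =
        Finset.univ.sup' Finset.univ_nonempty (fun s : S => vitMax R A T s) := by
  refine ⟨fun j hj _ s => vitMax_eq_viterbiStep R A hR hA hj s, ?_⟩
  rw [setOf_segPhi_eq_biUnion_segValues]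
  exact (isGreatest_biUnion univ_nonempty fun s _ =>
    isGreatest_segValues_vitMax R A hR hA hT s).csSup_eq
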